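/- For every positive integer m and every positive integer i, both (i+1)√(4m+1)/(2i+1) and (2i+1)m/(i√(4m+1)) belong to W_{m+2}(√(4m+1)). -/

import Mathlib

open scoped BigOperators

/-- `W r α` : the smallest set of nonneg reals containing `α` and closed under the
multiset rule from the paper. -/
inductive W (r : ℕ) (α : ℝ) : ℝ → Prop
  | base : W r α α
  | step (s : ℕ) (q : Fin s → ℝ) (β : ℝ)
      (hq : ∀ i, W r α (q i)) (hqpos : ∀ i, 0 < q i)
      (hβeq : β = α - ∑ i, (q i)⁻¹) (hβ0 : 0 ≤ β)
      (hs1 : 1 ≤ s) (hs : (s : ℤ) ≤ (r : ℤ) - ⌈β / (β + 1)⌉) : W r α β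

/-! With `α = √(4m + 1)`, `a t = (t + 1) α / (2 t + 1)` and `b t = (2 t + 1) m / (t α)`,
the relation `α ^ 2 = 4 m + 1` gives `b (t + 1) = α - m / a t - 1 / α` and
`a t = α - m / b t`: steps with `m + 1` and `m` summands. As `⌈β / (β + 1)⌉ ≤ 1`, a step
with `s` summands is allowed once `s + 1 ≤ r = m + 2`. Starting from `a 0 = α`, the two
identities alternately produce `b 1, a 1, b 2, a 2, …`. -/

lemma Int.ceil_div_add_one_le_one {β : ℝ} (hβ : 0 ≤ β) : ⌈β / (β + 1)⌉ ≤ 1 := by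
  rw [Int.ceil_le, Int.cast_one, div_le_one (by linarith)]
  linarith

namespace W

variable {r : ℕ} {α : ℝ}

lemma step_of_succ_le {s : ℕ} (q : Fin s → ℝ) {β : ℝ} (hq : ∀ j, W r α (q j))
    (hqpos : ∀ j, 0 < q j) (hβeq : β = α - ∑ j, (q j)⁻¹) (hβ0 : 0 ≤ β) (hs1 : 1 ≤ s)
    (hsr : s + 1 ≤ r) : W r α β := by
  refine .step s q β hq hqpos hβeq hβ0 hs1 ?_
  have hceil := Int.ceil_div_add_one_le_one hβ0
  omega

lemma of_eq_sub_natCast_div {s : ℕ} {x β : ℝ} (hx : W r α x) (hxpos : 0 < x)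
    (hβeq : β = α - s / x) (hβ0 : 0 ≤ β) (hs1 : 1 ≤ s) (hsr : s + 1 ≤ r) : W r α β :=
  step_of_succ_le (fun _ => x) (fun _ => hx) (fun _ => hxpos)
    (by simp [hβeq, div_eq_mul_inv]) hβ0 hs1 hsr

lemma of_eq_sub_natCast_div_add_one_div {s : ℕ} {x y β : ℝ} (hx : W r α x) (hy : W r α y)
    (hxpos : 0 < x) (hypos : 0 < y) (hβeq : β = α - (s / x + 1 / y)) (hβ0 : 0 ≤ β)
    (hsr : s + 2 ≤ r) : W r α β :=
  step_of_succ_le (Fin.cons y fun _ => x : Fin (s + 1) → ℝ)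
    (Fin.cases hy fun _ => hx) (Fin.cases hypos fun _ => hxpos)
    (by simp [Fin.sum_univ_succ, hβeq, div_eq_mul_inv, add_comm]) hβ0 (by omega) (by omega)

end W

noncomputable def seqA (α t : ℝ) : ℝ := (t + 1) * α / (2 * t + 1)

noncomputable def seqB (m : ℕ) (α t : ℝ) : ℝ := (2 * t + 1) * m / (t * α)

lemma W.seqB_succ {m : ℕ} {α t : ℝ} (hα : 0 < α) (hα2 : α ^ 2 = 4 * m + 1) (ht : 0 ≤ t)
    (ha : W (m + 2) α (seqA α t)) : W (m + 2) α (seqB m α (t + 1)) := by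
  refine W.of_eq_sub_natCast_div_add_one_div ha .base (by unfold seqA; positivity) hα ?_
    (by unfold seqB; positivity) le_rfl
  unfold seqA seqB
  field_simp
  linear_combination (-(t + 1)) * hα2

lemma W.seqA_of_seqB {m : ℕ} {α t : ℝ} (hα : 0 < α) (hm : 0 < m) (ht : 0 < t)
    (hb : W (m + 2) α (seqB m α t)) : W (m + 2) α (seqA α t) := by
  have hm' : (0 : ℝ) < m := by exact_mod_cast hm
  refine W.of_eq_sub_natCast_div hb (by unfold seqB; positivity) ?_
    (by unfold seqA; positivity) hm (by omega)
  unfold seqA seqB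
  field_simp
  ring

lemma W.seqA_natCast {m : ℕ} {α : ℝ} (hα : 0 < α) (hα2 : α ^ 2 = 4 * m + 1) (hm : 0 < m)
    (i : ℕ) : W (m + 2) α (seqA α i) := by
  induction i with
  | zero => simpa [seqA] using W.base
  | succ i ih =>
    rw [Nat.cast_succ]
    exact W.seqA_of_seqB hα hm (by positivity) (W.seqB_succ hα hα2 i.cast_nonneg ih)

theorem stmt_12 (m i : ℕ) (hm : 0 < m) (hi : 0 < i) :
    W (m + 2) (Real.sqrt (4 * m + 1))
        (((i : ℝ) + 1) * Real.sqrt (4 * m + 1) / (2 * i + 1)) ∧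
      W (m + 2) (Real.sqrt (4 * m + 1))
        ((2 * (i : ℝ) + 1) * m / (i * Real.sqrt (4 * m + 1))) := by
  have hα : 0 < Real.sqrt (4 * m + 1) := Real.sqrt_pos.mpr (by positivity)
  have hα2 : Real.sqrt (4 * m + 1) ^ 2 = 4 * m + 1 := Real.sq_sqrt (by positivity)
  refine ⟨W.seqA_natCast hα hα2 hm i, ?_⟩
  obtain ⟨k, rfl⟩ := Nat.exists_eq_add_of_lt hi
  have hb := W.seqB_succ hα hα2 k.cast_nonneg (W.seqA_natCast hα hα2 hm k)
  simpa [seqB, add_assoc] using hb
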